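/- arXiv:nlin/0111035 — 2 statements merged into one kernel-verified Lean document; each statement's English description precedes it below -/
import Mathlib

section
/- The Hamiltonian H = J1^2 + J2^2 + 2J3^2 - 2c1 x2 + 2a1 J3 + 2c2 (J3 x1 - x3 J1) Poisson-commutes with the quartic function I4 = c2^2 x1 (x1(J2^2+J3^2-J1^2) - 2(x3 J3 + x2 J2)J1) + c1^2 (x2^2+x3^2) + 2c2 (c1 x1 (x3 J2 - x2 J3) + (J3+a1)(x1(J2^2+J3^2) - (x2 J2 + x3 J3)J1)) - 2c1 (x2(J2^2+J3^2+a1 J3) + (x1 J1 - a1 x3)J2) + (J1^2+J2^2+J3^2)(J3+a1)^2 with respect to the e(3) Lie-Poisson bracket, i.e. {H, I4} = 0. -/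
/-!
For fixed `f`, the bracket `{f, ·}` is a derivation, so `{H, I₄}` is obtained from `I₄` by the
Leibniz rule once the six brackets `{H, J_i}`, `{H, x_i}` (the equations of motion of `H`) are
known. Those follow, by antisymmetry and the Leibniz rule again, from the structure constants
`{J_i, J_j} = ε_{ijk} J_k`, `{J_i, x_j} = ε_{ijk} x_k`, `{x_i, x_j} = 0`. What remains is a
polynomial identity.
-/

open MvPolynomial

noncomputable section

/-- The totally antisymmetric Levi-Civita symbol on three indices. -/
def eps (i j k : Fin 3) : ℝ :=
  if (i = 0 ∧ j = 1 ∧ k = 2) ∨ (i = 1 ∧ j = 2 ∧ k = 0) ∨ (i = 2 ∧ j = 0 ∧ k = 1) then 1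
  else if (i = 0 ∧ j = 2 ∧ k = 1) ∨ (i = 2 ∧ j = 1 ∧ k = 0) ∨ (i = 1 ∧ j = 0 ∧ k = 2) then -1
  else 0

/-- The coordinate `J_i` on `ℝ^6 = {(J₁,J₂,J₃,x₁,x₂,x₃)}` as a polynomial. -/
def Jv (i : Fin 3) : MvPolynomial (Fin 6) ℝ := X (Fin.castAdd 3 i)

/-- The coordinate `x_i` on `ℝ^6` as a polynomial. -/
def xv (i : Fin 3) : MvPolynomial (Fin 6) ℝ := X (Fin.natAdd 3 i)

/-- The `e(3)` Lie–Poisson bracket on polynomial functions on `ℝ^6`: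
`{f,g} = Σ_{i,j,k} ε_{ijk} (J_k ∂f/∂J_i ∂g/∂J_j + x_k ∂f/∂J_i ∂g/∂x_j + x_k ∂f/∂x_i ∂g/∂J_j)`. -/
def e3Bracket (f g : MvPolynomial (Fin 6) ℝ) : MvPolynomial (Fin 6) ℝ :=
  ∑ i : Fin 3, ∑ j : Fin 3, ∑ k : Fin 3, C (eps i j k) *
    (Jv k * pderiv (Fin.castAdd 3 i) f * pderiv (Fin.castAdd 3 j) g
     + xv k * pderiv (Fin.castAdd 3 i) f * pderiv (Fin.natAdd 3 j) g
     + xv k * pderiv (Fin.natAdd 3 i) f * pderiv (Fin.castAdd 3 j) g)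

local notation "P" => MvPolynomial (Fin 6) ℝ

namespace Derivation

variable {R A M : Type*} [CommSemiring R] [CommSemiring A] [AddCommMonoid M] [Algebra R A]
  [Module A M] [Module R M]

theorem finset_sum_apply {ι : Type*} (s : Finset ι) (D : ι → Derivation R A M) (a : A) :
    (∑ i ∈ s, D i) a = ∑ i ∈ s, D i a := by
  rw [← coeFnAddMonoidHom_apply, map_sum, Finset.sum_apply]
  rfl

theorem map_ofNat (D : Derivation R A M) (n : ℕ) [n.AtLeastTwo] : D (ofNat(n) : A) = 0 := by
  rw [← Nat.cast_ofNat]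
  exact D.map_natCast n

end Derivation

def e3BracketDerivation (f : P) : Derivation ℝ P P :=
  ∑ i : Fin 3, ∑ j : Fin 3, ∑ k : Fin 3, (C (eps i j k) : P) •
    ((Jv k * pderiv (Fin.castAdd 3 i) f) • pderiv (Fin.castAdd 3 j)
     + (xv k * pderiv (Fin.castAdd 3 i) f) • pderiv (Fin.natAdd 3 j)
     + (xv k * pderiv (Fin.natAdd 3 i) f) • pderiv (Fin.castAdd 3 j))

theorem e3BracketDerivation_apply (f g : P) : e3BracketDerivation f g = e3Bracket f g := by
  simp only [e3BracketDerivation, e3Bracket, Derivation.finset_sum_apply, Derivation.add_apply,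
    Derivation.smul_apply, smul_eq_mul, mul_assoc]

theorem eps_swap (i j k : Fin 3) : eps j i k = - eps i j k := by
  fin_cases i <;> fin_cases j <;> fin_cases k <;> simp [eps]

theorem e3Bracket_antisymm (f g : P) : e3Bracket g f = - e3Bracket f g := by
  unfold e3Bracket
  rw [Finset.sum_comm, ← Finset.sum_neg_distrib]
  refine Finset.sum_congr rfl fun i _ => ?_
  rw [← Finset.sum_neg_distrib]
  refine Finset.sum_congr rfl fun j _ => ?_
  rw [← Finset.sum_neg_distrib]
  refine Finset.sum_congr rfl fun k _ => ?_
  rw [eps_swap, map_neg]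
  ring

theorem pderiv_castAdd_Jv (i j : Fin 3) :
    pderiv (Fin.castAdd 3 i) (Jv j) = if i = j then 1 else 0 := by
  simp [Jv, pderiv_X, Pi.single_apply, eq_comm, Fin.ext_iff]

theorem pderiv_natAdd_Jv (i j : Fin 3) : pderiv (Fin.natAdd 3 i) (Jv j) = 0 :=
  pderiv_X_of_ne fun h => by simp [Fin.ext_iff] at h; omega

theorem pderiv_castAdd_xv (i j : Fin 3) : pderiv (Fin.castAdd 3 i) (xv j) = 0 :=
  pderiv_X_of_ne fun h => by simp [Fin.ext_iff] at h; omega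

theorem pderiv_natAdd_xv (i j : Fin 3) :
    pderiv (Fin.natAdd 3 i) (xv j) = if i = j then 1 else 0 := by
  simp [xv, pderiv_X, Pi.single_apply, eq_comm, Fin.ext_iff]

theorem e3Bracket_Jv_Jv (i j : Fin 3) : e3Bracket (Jv i) (Jv j) = ∑ k, C (eps i j k) * Jv k := by
  simp only [e3Bracket, pderiv_castAdd_Jv, pderiv_natAdd_Jv]
  simp [mul_ite, ite_mul, Finset.sum_ite_eq', mul_comm]

theorem e3Bracket_Jv_xv (i j : Fin 3) : e3Bracket (Jv i) (xv j) = ∑ k, C (eps i j k) * xv k := by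
  simp only [e3Bracket, pderiv_castAdd_Jv, pderiv_natAdd_Jv, pderiv_castAdd_xv, pderiv_natAdd_xv]
  simp [mul_ite, ite_mul, Finset.sum_ite_eq', mul_comm]

theorem e3Bracket_xv_Jv (i j : Fin 3) : e3Bracket (xv i) (Jv j) = ∑ k, C (eps i j k) * xv k := by
  simp only [e3Bracket, pderiv_castAdd_Jv, pderiv_natAdd_Jv, pderiv_castAdd_xv, pderiv_natAdd_xv]
  simp [mul_ite, ite_mul, Finset.sum_ite_eq', mul_comm]

theorem e3Bracket_xv_xv (i j : Fin 3) : e3Bracket (xv i) (xv j) = 0 := by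
  simp [e3Bracket, pderiv_castAdd_xv]

def kowalewskiH (a1 c1 c2 : ℝ) : P :=
  Jv 0 ^ 2 + Jv 1 ^ 2 + 2 * Jv 2 ^ 2 - 2 * C c1 * xv 1 + 2 * C a1 * Jv 2
    + 2 * C c2 * (Jv 2 * xv 0 - xv 2 * Jv 0)

def kowalewskiI4 (a1 c1 c2 : ℝ) : P :=
  C c2 ^ 2 * xv 0 * (xv 0 * (Jv 1 ^ 2 + Jv 2 ^ 2 - Jv 0 ^ 2)
      - 2 * (xv 2 * Jv 2 + xv 1 * Jv 1) * Jv 0)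
    + C c1 ^ 2 * (xv 1 ^ 2 + xv 2 ^ 2)
    + 2 * C c2 * (C c1 * xv 0 * (xv 2 * Jv 1 - xv 1 * Jv 2)
      + (Jv 2 + C a1) * (xv 0 * (Jv 1 ^ 2 + Jv 2 ^ 2)
        - (xv 1 * Jv 1 + xv 2 * Jv 2) * Jv 0))
    - 2 * C c1 * (xv 1 * (Jv 1 ^ 2 + Jv 2 ^ 2 + C a1 * Jv 2)
      + (xv 0 * Jv 0 - C a1 * xv 2) * Jv 1)
    + (Jv 0 ^ 2 + Jv 1 ^ 2 + Jv 2 ^ 2) * (Jv 2 + C a1) ^ 2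

theorem e3Bracket_kowalewskiH (a1 c1 c2 : ℝ) :
    let H := kowalewskiH a1 c1 c2
    e3Bracket H (Jv 0) = 2 * (Jv 1 * Jv 2 + C a1 * Jv 1 + C c2 * (xv 0 * Jv 1 - xv 1 * Jv 0)
        + C c1 * xv 2) ∧
      e3Bracket H (Jv 1) = -2 * (Jv 0 * Jv 2 + C a1 * Jv 0) ∧
      e3Bracket H (Jv 2) = 2 * (C c2 * (xv 2 * Jv 1 - xv 1 * Jv 2) - C c1 * xv 0) ∧
      e3Bracket H (xv 0) = 2 * (xv 1 * (2 * Jv 2 + C a1 + C c2 * xv 0) - xv 2 * Jv 1) ∧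
      e3Bracket H (xv 1) =
        2 * (xv 2 * (Jv 0 - C c2 * xv 2) - xv 0 * (2 * Jv 2 + C a1 + C c2 * xv 0)) ∧
      e3Bracket H (xv 2) = 2 * (xv 0 * Jv 1 - xv 1 * (Jv 0 - C c2 * xv 2)) := by
  refine ⟨?_, ?_, ?_, ?_, ?_, ?_⟩ <;>
  · rw [e3Bracket_antisymm, ← e3BracketDerivation_apply]
    simp only [kowalewskiH, map_add, map_sub, Derivation.leibniz, Derivation.leibniz_pow,
      derivation_C, Derivation.map_ofNat, e3BracketDerivation_apply, e3Bracket_Jv_Jv,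
      e3Bracket_Jv_xv, e3Bracket_xv_Jv, e3Bracket_xv_xv, Fin.sum_univ_three, eps, smul_eq_mul, nsmul_eq_mul,
      Fin.isValue, Fin.reduceEq, and_self, and_true, and_false, or_self, or_true, or_false,
      ↓reduceIte, C_0, C_1, C_neg]
    ring

/-- the generalized Kowalewski Hamiltonian `H` Poisson-commutes with the
quartic integral `I₄` with respect to the `e(3)` Lie–Poisson bracket: `{H, I₄} = 0`. -/
theorem kowalewski_H_I4_commute (a1 c1 c2 : ℝ) :
    e3Bracket
      (Jv 0 ^ 2 + Jv 1 ^ 2 + 2 * Jv 2 ^ 2 - 2 * C c1 * xv 1 + 2 * C a1 * Jv 2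
        + 2 * C c2 * (Jv 2 * xv 0 - xv 2 * Jv 0))
      (C c2 ^ 2 * xv 0 * (xv 0 * (Jv 1 ^ 2 + Jv 2 ^ 2 - Jv 0 ^ 2)
          - 2 * (xv 2 * Jv 2 + xv 1 * Jv 1) * Jv 0)
        + C c1 ^ 2 * (xv 1 ^ 2 + xv 2 ^ 2)
        + 2 * C c2 * (C c1 * xv 0 * (xv 2 * Jv 1 - xv 1 * Jv 2)
          + (Jv 2 + C a1) * (xv 0 * (Jv 1 ^ 2 + Jv 2 ^ 2)
            - (xv 1 * Jv 1 + xv 2 * Jv 2) * Jv 0))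
        - 2 * C c1 * (xv 1 * (Jv 1 ^ 2 + Jv 2 ^ 2 + C a1 * Jv 2)
          + (xv 0 * Jv 0 - C a1 * xv 2) * Jv 1)
        + (Jv 0 ^ 2 + Jv 1 ^ 2 + Jv 2 ^ 2) * (Jv 2 + C a1) ^ 2) = 0 := by
  change e3Bracket (kowalewskiH a1 c1 c2) (kowalewskiI4 a1 c1 c2) = 0
  obtain ⟨hJ0, hJ1, hJ2, hx0, hx1, hx2⟩ := e3Bracket_kowalewskiH a1 c1 c2
  rw [← e3BracketDerivation_apply]
  simp only [kowalewskiI4, map_add, map_sub, Derivation.leibniz, Derivation.leibniz_pow,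
    derivation_C, Derivation.map_ofNat, e3BracketDerivation_apply, hJ0, hJ1, hJ2, hx0, hx1, hx2,
    smul_eq_mul]
  ring
end
end

section
/- The birational change of variables μ = y/(x^2 + (H + I1 c2^2)x + I4 - I1 c1^2), z = I1 x (c1^2 - c2^2 x)/(x^2 + (H + I1 c2^2)x + I4 - I1 c1^2) transforms the equation d2(z)μ^4 + d1(z)μ^2 + d0(z) = 0 with a1 = I2 = 0 into y^2 = x(x^2 + Hx + I4)(x^2 + (H + c2^2 I1)x + I4 - c1^2 I1): that is, if (x,y) satisfies the latter equation and the common denominator is nonzero, then (z,μ) defined by these formulas satisfies d2(z)μ^4 + d1(z)μ^2 + d0(z) = 0, where d2(z)=z+c2^2 I1, d1(z) = -2z^2 + (H - c2^2 I1)z - c1^2 I1, d0(z) = z^3 - Hz^2 + I4 z. -/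
/-- the birational change of variables
`μ = y/(x² + (H + I₁c₂²)x + I₄ - I₁c₁²)`, `z = I₁x(c₁² - c₂²x)/(x² + (H + I₁c₂²)x + I₄ - I₁c₁²)`
transforms the spectral-curve equation `d₂(z)μ⁴ + d₁(z)μ² + d₀(z) = 0` (at `a₁ = I₂ = 0`, with
`d₂(z) = z + c₂²I₁`, `d₁(z) = -2z² + (H - c₂²I₁)z - c₁²I₁`, `d₀(z) = z³ - Hz² + I₄z`) into the
hyperelliptic curve `y² = x(x² + Hx + I₄)(x² + (H + c₂²I₁)x + I₄ - c₁²I₁)`: whenever `(x,y)`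
lies on the latter curve and the common denominator is nonzero, `(z,μ)` satisfies the former. -/
theorem kowalewski_curve_normal_form (H I1 I4 c1 c2 x y : ℝ)
    (hD : x ^ 2 + (H + I1 * c2 ^ 2) * x + I4 - I1 * c1 ^ 2 ≠ 0)
    (hy : y ^ 2 = x * (x ^ 2 + H * x + I4)
        * (x ^ 2 + (H + c2 ^ 2 * I1) * x + I4 - c1 ^ 2 * I1)) :
    let D := x ^ 2 + (H + I1 * c2 ^ 2) * x + I4 - I1 * c1 ^ 2
    let mu := y / D
    let z := I1 * x * (c1 ^ 2 - c2 ^ 2 * x) / D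
    (z + c2 ^ 2 * I1) * mu ^ 4
      + (-2 * z ^ 2 + (H - c2 ^ 2 * I1) * z - c1 ^ 2 * I1) * mu ^ 2
      + (z ^ 3 - H * z ^ 2 + I4 * z) = 0 := by
  have key : ∀ Dv zN R : ℝ,
      Dv = x ^ 2 + (H + I1 * c2 ^ 2) * x + I4 - I1 * c1 ^ 2 →
      zN = I1 * x * (c1 ^ 2 - c2 ^ 2 * x) →
      R = x * (x ^ 2 + H * x + I4) * (x ^ 2 + (H + c2 ^ 2 * I1) * x + I4 - c1 ^ 2 * I1) →
      (zN + c2 ^ 2 * I1 * Dv) * R ^ 2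
        + (-2 * zN ^ 2 + (H - c2 ^ 2 * I1) * zN * Dv - c1 ^ 2 * I1 * Dv ^ 2) * Dv * R
        + (zN ^ 3 - H * zN ^ 2 * Dv + I4 * zN * Dv ^ 2) * Dv ^ 2 = 0 := by
    rintro Dv zN R rfl rfl rfl; ring
  set Dv := x ^ 2 + (H + I1 * c2 ^ 2) * x + I4 - I1 * c1 ^ 2 with hDv
  set zN := I1 * x * (c1 ^ 2 - c2 ^ 2 * x) with hzN
  set R := x * (x ^ 2 + H * x + I4)
        * (x ^ 2 + (H + c2 ^ 2 * I1) * x + I4 - c1 ^ 2 * I1) with hR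
  have key' := key Dv zN R hDv hzN hR
  clear_value Dv zN R
  clear hDv hzN hR key
  intro D mu z
  have hD' : Dv ≠ 0 := hD
  show (zN / Dv + c2 ^ 2 * I1) * (y / Dv) ^ 4
      + (-2 * (zN / Dv) ^ 2 + (H - c2 ^ 2 * I1) * (zN / Dv) - c1 ^ 2 * I1) * (y / Dv) ^ 2
      + ((zN / Dv) ^ 3 - H * (zN / Dv) ^ 2 + I4 * (zN / Dv)) = 0
  field_simp
  linear_combination key' + ((zN + c2 ^ 2 * I1 * Dv) * (y ^ 2 + R)
    + (-2 * zN ^ 2 + (H - c2 ^ 2 * I1) * zN * Dv - c1 ^ 2 * I1 * Dv ^ 2) * Dv) * hy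
end
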